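/- Let I ⊂ ℝ contain no two numbers whose difference is a nonzero integer, and suppose 0 ∈ I. If φ_1, φ_2 ∈ PC(𝕋;Γ)^{N×N} are I-regular and have no points of discontinuity in common, then the product φ_1φ_2 is I-regular and wind(φ_1φ_2;I) = wind(φ_1;I) + wind(φ_2;I). -/

import Mathlib

open Complex Filter Set Topology
open scoped Real

noncomputable section

/-- `N × N` complex matrices. -/
abbrev Mat (N : ℕ) := Matrix (Fin N) (Fin N) ℂ

/-- The point `e^{iθ}` on the unit circle. -/
def expi (θ : ℝ) : ℂ := Complex.exp (θ * Complex.I)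

/-- The unit circle `𝕋 ⊆ ℂ`. -/
def circleSet : Set ℂ := Metric.sphere (0 : ℂ) 1

/-- A finite set `Γ = {τ₁, …, τ_R}` of distinct points on the unit circle,
recorded through their arguments `0 ≤ θ₁ < … < θ_R < 2π`. -/
structure JumpData (R : ℕ) where
  θ : Fin R → ℝ
  mono : StrictMono θ
  mem_Ico : ∀ k, θ k ∈ Set.Ico (0 : ℝ) (2 * π)

namespace JumpData
variable {R : ℕ} (D : JumpData R)

/-- The jump point `τ_k = e^{iθ_k}`. -/
def τ (k : Fin R) : ℂ := expi (D.θ k)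

/-- The set `Γ = {τ₁, …, τ_R}`. -/
def Γ : Set ℂ := Set.range D.τ

/-- The angle of the next jump point, `θ_{k+1}`, with the convention
`θ_{R+1} = θ₁ + 2π`. -/
def nextθ (k : Fin R) : ℝ :=
  if h : (k : ℕ) + 1 < R then D.θ ⟨(k : ℕ) + 1, h⟩ else D.θ ⟨0, k.pos⟩ + 2 * π

end JumpData

/-- `φ(τ+0) = L`:  one-sided limit from the "plus" side (counterclockwise). -/
def limPS (f : ℂ → ℂ) (τ L : ℂ) : Prop :=
  Tendsto (fun θ : ℝ => f (τ * expi θ)) (nhdsWithin 0 (Set.Ioi 0)) (nhds L)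

/-- `φ(τ-0) = L`:  one-sided limit from the "minus" side. -/
def limMS (f : ℂ → ℂ) (τ L : ℂ) : Prop :=
  Tendsto (fun θ : ℝ => f (τ * expi (-θ))) (nhdsWithin 0 (Set.Ioi 0)) (nhds L)

/-- One-sided limit `φ(τ+0) = P` for a matrix function, entrywise. -/
def limP {N : ℕ} (φ : ℂ → Mat N) (τ : ℂ) (P : Mat N) : Prop :=
  ∀ i i', limPS (fun z => φ z i i') τ (P i i')

/-- One-sided limit `φ(τ-0) = M` for a matrix function, entrywise. -/
def limM {N : ℕ} (φ : ℂ → Mat N) (τ : ℂ) (M : Mat N) : Prop :=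
  ∀ i i', limMS (fun z => φ z i i') τ (M i i')

/-- The scalar class `PC(𝕋;Γ)`: continuous on `𝕋 ∖ Γ` with finite one-sided limits
at each point of `Γ`. -/
def IsPCS (Γ : Set ℂ) (f : ℂ → ℂ) : Prop :=
  ContinuousOn f (circleSet \ Γ) ∧
  ∀ τ ∈ Γ, (∃ L, limPS f τ L) ∧ (∃ L, limMS f τ L)

/-- The scalar class `PC^{1+ε}(𝕋;Γ)`: piecewise continuous, continuously
differentiable off `Γ`, with a derivative which is Hölder continuous of order `ε`
on each open arc avoiding `Γ`. -/
def IsPCHS (ε : ℝ) (Γ : Set ℂ) (f : ℂ → ℂ) : Prop :=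
  IsPCS Γ f ∧
  ∃ C : ℝ, ∀ x y : ℝ, x < y → y ≤ x + 2 * π → (∀ θ ∈ Set.Ioo x y, expi θ ∉ Γ) →
    ∃ g : ℝ → ℂ,
      (∀ θ ∈ Set.Ioo x y, HasDerivAt (fun s : ℝ => f (expi s)) (g θ) θ) ∧
      ∀ θ₁ ∈ Set.Ioo x y, ∀ θ₂ ∈ Set.Ioo x y, ‖g θ₁ - g θ₂‖ ≤ C * |θ₁ - θ₂| ^ ε

/-- The scalar class `C^{1+ε}_pw(𝕋;Γ) = PC^{1+ε}(𝕋;Γ) ∩ C(𝕋)`. -/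
def IsCpwS (ε : ℝ) (Γ : Set ℂ) (f : ℂ → ℂ) : Prop :=
  IsPCHS ε Γ f ∧ ContinuousOn f circleSet

/-- `PC(𝕋;Γ)^{N×N}`: all entries belong to `PC(𝕋;Γ)`. -/
def IsPCmat {N : ℕ} (Γ : Set ℂ) (φ : ℂ → Mat N) : Prop :=
  ∀ i i', IsPCS Γ (fun z => φ z i i')

/-- `PC^{1+ε}(𝕋;Γ)^{N×N}`: all entries belong to `PC^{1+ε}(𝕋;Γ)`. -/
def IsPCHmat {N : ℕ} (ε : ℝ) (Γ : Set ℂ) (φ : ℂ → Mat N) : Prop :=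
  ∀ i i', IsPCHS ε Γ (fun z => φ z i i')

/-- `C^{1+ε}_pw(𝕋;Γ)^{N×N}`: all entries belong to `C^{1+ε}_pw(𝕋;Γ)`. -/
def IsCpwMat {N : ℕ} (ε : ℝ) (Γ : Set ℂ) (φ : ℂ → Mat N) : Prop :=
  ∀ i i', IsCpwS ε Γ (fun z => φ z i i')

/-- `L` is the matrix logarithm `(1/2πi) log (φ(τ+0)⁻¹ φ(τ-0))` whose eigenvalues
have real parts in `I`; this includes the requirement that the one-sided limits
exist and are invertible. -/
def IsJumpLog {N : ℕ} (I : Set ℝ) (φ : ℂ → Mat N) (τ : ℂ) (L : Mat N) : Prop :=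
  ∃ P M : Mat N, limP φ τ P ∧ limM φ τ M ∧ IsUnit P ∧ IsUnit M ∧
    NormedSpace.exp ((2 * (π : ℂ) * Complex.I) • L) = P⁻¹ * M ∧
    ∀ μ ∈ spectrum ℂ L, μ.re ∈ I

/-- `φ` is `I`-regular. -/
def IsIRegular {N R : ℕ} (I : Set ℝ) (D : JumpData R) (φ : ℂ → Mat N) : Prop :=
  (∀ z ∈ circleSet \ D.Γ, IsUnit (φ z)) ∧
  ∀ k : Fin R, ∃ L : Mat N, IsJumpLog I φ (D.τ k) L

/-- `δ` is the increment of a continuous branch of `log f` along the open arc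
`{e^{iθ} : x < θ < y}`. -/
def ArcLogIncr (f : ℂ → ℂ) (x y : ℝ) (δ : ℂ) : Prop :=
  ∃ h : ℝ → ℂ, ContinuousOn h (Set.Ioo x y) ∧
    (∀ θ ∈ Set.Ioo x y, f (expi θ) = Complex.exp (h θ)) ∧
    ∃ hx hy : ℂ,
      Tendsto h (nhdsWithin x (Set.Ioi x)) (nhds hx) ∧
      Tendsto h (nhdsWithin y (Set.Iio y)) (nhds hy) ∧ δ = hy - hx

/-- `w` is the winding number of the (continuous, nonvanishing) function on the circle
agreeing with `f` off the finite set `Γ`. -/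
def IsWindingNumberOff (Γ : Set ℂ) (f : ℂ → ℂ) (w : ℤ) : Prop :=
  ∃ h : ℝ → ℂ, ContinuousOn h (Set.Icc 0 (2 * π)) ∧
    (∀ θ ∈ Set.Icc (0:ℝ) (2 * π), expi θ ∉ Γ → f (expi θ) = Complex.exp (h θ)) ∧
    (w : ℂ) = (h (2 * π) - h 0) / (2 * (π : ℂ) * Complex.I)

/-- `w` is the usual winding number of the continuous nonvanishing function `f` on `𝕋`. -/
def IsWindingNumber (f : ℂ → ℂ) (w : ℤ) : Prop := IsWindingNumberOff ∅ f w

/-- `w = wind(φ; I)` is the `I`-winding number of the `I`-regular function `φ`. -/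
def IsIWindNum {N R : ℕ} (I : Set ℝ) (D : JumpData R) (φ : ℂ → Mat N) (w : ℤ) : Prop :=
  if R = 0 then IsWindingNumber (fun z => (φ z).det) w
  else ∃ (L : Fin R → Mat N) (δ : Fin R → ℂ),
    (∀ k, IsJumpLog I φ (D.τ k) (L k)) ∧
    (∀ k, ArcLogIncr (fun z => (φ z).det) (D.θ k) (D.nextθ k) (δ k)) ∧
    (w : ℂ) = -(∑ k, (L k).trace) + (1 / (2 * (π : ℂ) * Complex.I)) * ∑ k, δ k

/-- The scalar function `u_{β,τ}(t) = exp(iβ arg(-t/τ))`, `|arg| < π`. -/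
def uScalar (β τ z : ℂ) : ℂ := Complex.exp (Complex.I * β * ((-z / τ).arg : ℝ))

/-- The matrix function `u_{B,τ}(t) = exp(iB arg(-t/τ))`, `|arg| < π`. -/
def uMat {N : ℕ} (B : Mat N) (τ : ℂ) (z : ℂ) : Mat N :=
  NormedSpace.exp ((Complex.I * ((-z / τ).arg : ℝ)) • B)

/-- `n`-th Fourier coefficient of a scalar symbol. -/
def fourierCoefS (f : ℂ → ℂ) (n : ℤ) : ℂ :=
  (1 / (2 * (π : ℂ))) * ∫ θ in (0:ℝ)..(2 * π), f (expi θ) * Complex.exp (-(n : ℂ) * θ * Complex.I)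

/-- `n`-th (matrix) Fourier coefficient of a matrix symbol, computed entrywise. -/
def fourierCoefM {N : ℕ} (a : ℂ → Mat N) (n : ℤ) : Mat N :=
  Matrix.of fun i i' => fourierCoefS (fun z => a z i i') n

/-- The finite `nN × nN` block Toeplitz matrix `T_n(a) = (a_{j-k})_{j,k=0}^{n-1}`. -/
def toeplitzMat {N : ℕ} (a : ℂ → Mat N) (n : ℕ) :
    Matrix (Fin n × Fin N) (Fin n × Fin N) ℂ :=
  Matrix.of fun p q => fourierCoefM a ((p.1 : ℤ) - (q.1 : ℤ)) p.2 q.2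

/-- The flipped symbol `ã(e^{iθ}) = a(e^{-iθ})`; on the circle, `z ↦ a z⁻¹`. -/
def tilde {α : Type*} (a : ℂ → α) : ℂ → α := fun z => a z⁻¹

/-- The Hilbert space `ℓ²(ℤ₊)^N`. -/
abbrev Hsp (N : ℕ) := lp (fun _ : ℕ => EuclideanSpace ℂ (Fin N)) 2

/-- The standard orthonormal basis vector of `ℓ²(ℤ₊)^N` with index `(k, i)`. -/
def basVec (N : ℕ) (p : ℕ × Fin N) : Hsp N := lp.single 2 p.1 (EuclideanSpace.single p.2 1)

/-- The `((j,i),(k,i'))` matrix entry of an operator on `ℓ²(ℤ₊)^N`. -/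
def opEntry {N : ℕ} (A : Hsp N →L[ℂ] Hsp N) (j k : ℕ) (i i' : Fin N) : ℂ :=
  (A (basVec N (k, i'))) j i

/-- `A` is the (block) Toeplitz operator `T(a) = (a_{j-k})_{j,k≥0}` on `ℓ²(ℤ₊)^N`. -/
def IsToeplitzOp {N : ℕ} (a : ℂ → Mat N) (A : Hsp N →L[ℂ] Hsp N) : Prop :=
  ∀ j k : ℕ, ∀ i i' : Fin N, opEntry A j k i i' = fourierCoefM a ((j : ℤ) - (k : ℤ)) i i'

/-- `A` is the (block) Hankel operator `H(a) = (a_{j+k+1})_{j,k≥0}` on `ℓ²(ℤ₊)^N`. -/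
def IsHankelOp {N : ℕ} (a : ℂ → Mat N) (A : Hsp N →L[ℂ] Hsp N) : Prop :=
  ∀ j k : ℕ, ∀ i i' : Fin N, opEntry A j k i i' = fourierCoefM a ((j : ℤ) + (k : ℤ) + 1) i i'

/-- `A` is Fredholm: closed range and finite dimensional kernel and cokernel. -/
def IsFredholm {N : ℕ} (A : Hsp N →L[ℂ] Hsp N) : Prop :=
  IsClosed (LinearMap.range (A : Hsp N →ₗ[ℂ] Hsp N) : Set (Hsp N)) ∧
  FiniteDimensional ℂ (LinearMap.ker (A : Hsp N →ₗ[ℂ] Hsp N)) ∧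
  FiniteDimensional ℂ (Hsp N ⧸ LinearMap.range (A : Hsp N →ₗ[ℂ] Hsp N))

/-- The Fredholm index `ind A = dim ker A - dim coker A`. -/
def fredholmIndex {N : ℕ} (A : Hsp N →L[ℂ] Hsp N) : ℤ :=
  (Module.finrank ℂ (LinearMap.ker (A : Hsp N →ₗ[ℂ] Hsp N)) : ℤ) - Module.finrank ℂ (Hsp N ⧸ LinearMap.range (A : Hsp N →ₗ[ℂ] Hsp N))

/-- Membership in `L^∞(𝕋)^{N×N}` (via a bounded measurable representative). -/
def IsLinf {N : ℕ} (a : ℂ → Mat N) : Prop :=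
  (∀ i i', Measurable fun θ : ℝ => a (expi θ) i i') ∧
  ∃ C : ℝ, ∀ z ∈ circleSet, ∀ i i', ‖a z i i'‖ ≤ C

/-- Hilbert-Schmidt operator on `ℓ²(ℤ₊)^N`. -/
def IsHS {N : ℕ} (A : Hsp N →L[ℂ] Hsp N) : Prop :=
  Summable fun p : ℕ × Fin N => ‖A (basVec N p)‖ ^ 2

/-- Trace class operator on `ℓ²(ℤ₊)^N`: a finite sum of products of pairs of
Hilbert-Schmidt operators. -/
def IsTraceClass {N : ℕ} (A : Hsp N →L[ℂ] Hsp N) : Prop :=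
  ∃ (m : ℕ) (B C : Fin m → (Hsp N →L[ℂ] Hsp N)),
    (∀ i, IsHS (B i)) ∧ (∀ i, IsHS (C i)) ∧ A = ∑ i, B i * C i

/-- The trace norm `‖A‖₁`, expressed as the supremum of `|Σ ⟨A f_k, g_k⟩|` over
finite orthonormal families `(f_k)`, `(g_k)`. -/
def traceNorm {N : ℕ} (A : Hsp N →L[ℂ] Hsp N) : ℝ :=
  sSup {r : ℝ | ∃ (m : ℕ) (f g : Fin m → Hsp N), Orthonormal ℂ f ∧ Orthonormal ℂ g ∧
    r = ‖∑ k, @inner ℂ _ _ (A (f k)) (g k)‖}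

/-- The finite `nN × nN` matrices act on `ℓ²(ℤ₊)^N` (supported on the first `n`
vector coordinates). -/
def embedMat {N : ℕ} (n : ℕ) (M : Matrix (Fin n × Fin N) (Fin n × Fin N) ℂ) :
    Hsp N →L[ℂ] Hsp N :=
  ∑ p : Fin n × Fin N, ∑ q : Fin n × Fin N,
    M p q • ((innerSL ℂ (basVec N ((q.1 : ℕ), q.2))).smulRight (basVec N ((p.1 : ℕ), p.2)))

/-- The sequence of finite sections `T_n(a)` is stable: the matrices are eventually
invertible with uniformly bounded inverses (in the `ℓ²` operator norm). -/
def IsStableSeq {N : ℕ} (a : ℂ → Mat N) : Prop :=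
  ∃ (n₀ : ℕ) (C : ℝ), ∀ n : ℕ, n₀ ≤ n → IsUnit (toeplitzMat a n) ∧
    ‖Matrix.toEuclideanCLM (𝕜 := ℂ) ((toeplitzMat a n)⁻¹)‖ ≤ C

/-- The Barnes G-function, via its canonical product. -/
def BarnesG (w : ℂ) : ℂ :=
  (2 * (π : ℂ)) ^ ((w - 1) / 2) *
    Complex.exp (-(w) * (w - 1) / 2 - (Real.eulerMascheroniConstant : ℂ) * (w - 1) ^ 2 / 2) *
    ∏' k : ℕ, ((1 + (w - 1) / (k + 1)) ^ ((k : ℕ) + 1) *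
      Complex.exp (-(w - 1) + (w - 1) ^ 2 / (2 * ((k : ℕ) + 1))))

/-- The geometric mean `G[f] = exp((1/2π) ∫ log f)`, where `log f` is a continuous
branch of the logarithm of the continuous extension of `f` off `Γ`. -/
def IsGeoMean (Γ : Set ℂ) (f : ℂ → ℂ) (G : ℂ) : Prop :=
  ∃ h : ℝ → ℂ, ContinuousOn h (Set.Icc 0 (2 * π)) ∧
    (∀ θ ∈ Set.Icc (0:ℝ) (2 * π), expi θ ∉ Γ → f (expi θ) = Complex.exp (h θ)) ∧
    G = Complex.exp ((1 / (2 * (π : ℂ))) * ∫ θ in (0:ℝ)..(2 * π), h θ)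

/-! At a jump point `τ` where `φ₁` is continuous, the one-sided limits of `φ₁φ₂` are
`φ₁(τ) φ₂(τ±0)`, so `φ₁φ₂` has the same jump quotient as `φ₂` and `L₂` is its logarithm;
where `φ₂` is continuous the quotient is that of `φ₁` conjugated by `φ₂(τ)`, and so is the
logarithm. The logarithm `L` of a factor continuous at `τ` satisfies `exp(2πi L) = 1`, so its
eigenvalues are integers with real parts in `I`; as `0 ∈ I`, they all vanish and `tr L = 0`.
Hence the traces of the jump logarithms add, and so do the increments of continuous branches
of `log det` along each arc, since `det` is multiplicative. -/

namespace Matrix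

variable {n : Type*} [Fintype n] [DecidableEq n]

theorem trace_eq_zero_of_spectrum_subset_zero {L : Matrix n n ℂ}
    (h : spectrum ℂ L ⊆ {0}) : L.trace = 0 := by
  rw [trace_eq_sum_roots_charpoly]
  refine Multiset.sum_eq_zero fun μ hμ => h ?_
  rw [mem_spectrum_iff_isRoot_charpoly]
  exact (Polynomial.mem_roots (charpoly_monic L).ne_zero).mp hμ

theorem exists_intCast_eq_of_mem_spectrum_of_exp_eq_one {L : Matrix n n ℂ}
    (hL : NormedSpace.exp ((2 * (π : ℂ) * Complex.I) • L) = 1) {μ : ℂ} (hμ : μ ∈ spectrum ℂ L) :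
    ∃ m : ℤ, μ = m := by
  -- any matrix norm will do: `exp` does not depend on it
  let _ : NormedRing (Matrix n n ℂ) := Matrix.linftyOpNormedRing
  let _ : NormedAlgebra ℂ (Matrix n n ℂ) := Matrix.linftyOpNormedAlgebra
  have h2πI : (2 * (π : ℂ) * Complex.I) ≠ 0 := by simp [Real.pi_ne_zero]
  have hexp : NormedSpace.exp ((2 * (π : ℂ) * Complex.I) * μ) ∈ spectrum ℂ (1 : Matrix n n ℂ) := by
    rw [← hL]
    apply spectrum.exp_mem_exp
    exact spectrum.smul_mem_smul_iff (r := Units.mk0 _ h2πI) |>.mpr hμ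
  have : Nontrivial (Matrix n n ℂ) :=
    not_subsingleton_iff_nontrivial.mp fun _ => spectrum.mem_iff.mp hμ (isUnit_of_subsingleton _)
  rw [spectrum.one_eq, Set.mem_singleton_iff, ← Complex.exp_eq_exp_ℂ,
    Complex.exp_eq_one_iff] at hexp
  obtain ⟨m, hm⟩ := hexp
  exact ⟨m, mul_left_cancel₀ h2πI (by rw [hm]; ring)⟩

theorem trace_eq_zero_of_exp_eq_one {I : Set ℝ}
    (hI : ∀ x ∈ I, ∀ y ∈ I, ∀ m : ℤ, x - y = (m : ℝ) → m = 0) (h0 : (0 : ℝ) ∈ I)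
    {L : Matrix n n ℂ} (hL : NormedSpace.exp ((2 * (π : ℂ) * Complex.I) • L) = 1)
    (hspec : ∀ μ ∈ spectrum ℂ L, μ.re ∈ I) : L.trace = 0 := by
  refine trace_eq_zero_of_spectrum_subset_zero fun μ hμ => ?_
  obtain ⟨m, rfl⟩ := exists_intCast_eq_of_mem_spectrum_of_exp_eq_one hL hμ
  have hm : m = 0 := hI _ (hspec _ hμ) 0 h0 m (by simp)
  simp [hm]

end Matrix

lemma norm_expi (θ : ℝ) : ‖expi θ‖ = 1 := by
  simp [expi, Complex.norm_exp]

lemma continuous_expi : Continuous expi := by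
  unfold expi; fun_prop

lemma expi_mem_circleSet (θ : ℝ) : expi θ ∈ circleSet :=
  mem_sphere_zero_iff_norm.mpr (norm_expi θ)

lemma mul_expi_mem_circleSet {τ : ℂ} (hτ : τ ∈ circleSet) (θ : ℝ) :
    τ * expi θ ∈ circleSet := by
  rw [circleSet, mem_sphere_zero_iff_norm] at hτ ⊢
  rw [norm_mul, hτ, norm_expi, one_mul]

lemma JumpData.τ_mem_circleSet {R : ℕ} (D : JumpData R) (k : Fin R) : D.τ k ∈ circleSet :=
  expi_mem_circleSet (D.θ k)

lemma tendsto_mul_expi_nhdsWithin_circleSet {τ : ℂ} (hτ : τ ∈ circleSet) {g : ℝ → ℝ}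
    (hg : Continuous g) (hg0 : g 0 = 0) :
    Tendsto (fun θ => τ * expi (g θ)) (𝓝 0) (𝓝[circleSet] τ) := by
  refine tendsto_nhdsWithin_of_tendsto_nhds_of_eventually_within _ ?_
    (.of_forall fun θ => mul_expi_mem_circleSet hτ (g θ))
  simpa [hg0, expi] using ((continuous_expi.comp hg).const_mul τ).tendsto 0

section OneSidedLimits

variable {N : ℕ} {φ φ₁ φ₂ : ℂ → Mat N} {τ : ℂ} {P P' P₁ P₂ : Mat N}

lemma limP_iff_tendsto :
    limP φ τ P ↔ Tendsto (fun θ : ℝ => φ (τ * expi θ)) (𝓝[>] 0) (𝓝 P) :=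
  (tendsto_pi_nhds.trans (forall_congr' fun _ => tendsto_pi_nhds)).symm

lemma limM_iff_tendsto :
    limM φ τ P ↔ Tendsto (fun θ : ℝ => φ (τ * expi (-θ))) (𝓝[>] 0) (𝓝 P) :=
  (tendsto_pi_nhds.trans (forall_congr' fun _ => tendsto_pi_nhds)).symm

lemma limP.unique (h : limP φ τ P) (h' : limP φ τ P') : P = P' :=
  tendsto_nhds_unique (limP_iff_tendsto.mp h) (limP_iff_tendsto.mp h')

lemma limM.unique (h : limM φ τ P) (h' : limM φ τ P') : P = P' :=
  tendsto_nhds_unique (limM_iff_tendsto.mp h) (limM_iff_tendsto.mp h')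

lemma limP.mul (h₁ : limP φ₁ τ P₁) (h₂ : limP φ₂ τ P₂) :
    limP (fun z => φ₁ z * φ₂ z) τ (P₁ * P₂) :=
  limP_iff_tendsto.mpr ((limP_iff_tendsto.mp h₁).mul (limP_iff_tendsto.mp h₂))

lemma limM.mul (h₁ : limM φ₁ τ P₁) (h₂ : limM φ₂ τ P₂) :
    limM (fun z => φ₁ z * φ₂ z) τ (P₁ * P₂) :=
  limM_iff_tendsto.mpr ((limM_iff_tendsto.mp h₁).mul (limM_iff_tendsto.mp h₂))

lemma limP_of_continuousWithinAt (hτ : τ ∈ circleSet)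
    (hc : ∀ i i', ContinuousWithinAt (fun z => φ z i i') circleSet τ) : limP φ τ (φ τ) :=
  fun i i' => (hc i i').tendsto.comp
    ((tendsto_mul_expi_nhdsWithin_circleSet hτ continuous_id rfl).mono_left nhdsWithin_le_nhds)

lemma limM_of_continuousWithinAt (hτ : τ ∈ circleSet)
    (hc : ∀ i i', ContinuousWithinAt (fun z => φ z i i') circleSet τ) : limM φ τ (φ τ) :=
  fun i i' => (hc i i').tendsto.comp
    ((tendsto_mul_expi_nhdsWithin_circleSet hτ continuous_neg neg_zero).mono_left
      nhdsWithin_le_nhds)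

end OneSidedLimits

namespace IsJumpLog

variable {N : ℕ} {I : Set ℝ} {φ φ₁ φ₂ : ℂ → Mat N} {τ : ℂ} {L L₁ L₂ : Mat N}

lemma re_mem (h : IsJumpLog I φ τ L) : ∀ μ ∈ spectrum ℂ L, μ.re ∈ I := by
  obtain ⟨-, -, -, -, -, -, -, hspec⟩ := h
  exact hspec

lemma isUnit_of_continuousWithinAt (h : IsJumpLog I φ τ L) (hτ : τ ∈ circleSet)
    (hc : ∀ i i', ContinuousWithinAt (fun z => φ z i i') circleSet τ) : IsUnit (φ τ) := by
  obtain ⟨P, -, hP, -, hPu, -⟩ := h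
  rwa [← hP.unique (limP_of_continuousWithinAt hτ hc)]

lemma exp_eq_one_of_continuousWithinAt (h : IsJumpLog I φ τ L) (hτ : τ ∈ circleSet)
    (hc : ∀ i i', ContinuousWithinAt (fun z => φ z i i') circleSet τ) :
    NormedSpace.exp ((2 * (π : ℂ) * Complex.I) • L) = 1 := by
  obtain ⟨P, M, hP, hM, hPu, -, hexp, -⟩ := h
  rw [hexp, hM.unique (limM_of_continuousWithinAt hτ hc),
    ← hP.unique (limP_of_continuousWithinAt hτ hc)]
  exact Matrix.nonsing_inv_mul P ((Matrix.isUnit_iff_isUnit_det P).mp hPu)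

lemma trace_eq_zero_of_continuousWithinAt
    (hI : ∀ x ∈ I, ∀ y ∈ I, ∀ m : ℤ, x - y = (m : ℝ) → m = 0) (h0 : (0 : ℝ) ∈ I)
    (h : IsJumpLog I φ τ L) (hτ : τ ∈ circleSet)
    (hc : ∀ i i', ContinuousWithinAt (fun z => φ z i i') circleSet τ) : L.trace = 0 :=
  Matrix.trace_eq_zero_of_exp_eq_one hI h0 (h.exp_eq_one_of_continuousWithinAt hτ hc) h.re_mem

lemma mul_left_of_continuousWithinAt (h₂ : IsJumpLog I φ₂ τ L₂) (hτ : τ ∈ circleSet)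
    (hc : ∀ i i', ContinuousWithinAt (fun z => φ₁ z i i') circleSet τ) (hu : IsUnit (φ₁ τ)) :
    IsJumpLog I (fun z => φ₁ z * φ₂ z) τ L₂ := by
  obtain ⟨P, M, hP, hM, hPu, hMu, hexp, hspec⟩ := h₂
  refine ⟨φ₁ τ * P, φ₁ τ * M, (limP_of_continuousWithinAt hτ hc).mul hP,
    (limM_of_continuousWithinAt hτ hc).mul hM, hu.mul hPu, hu.mul hMu, ?_, hspec⟩
  rw [hexp, Matrix.mul_inv_rev, mul_assoc, ← mul_assoc (φ₁ τ)⁻¹,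
    Matrix.nonsing_inv_mul _ ((Matrix.isUnit_iff_isUnit_det _).mp hu), one_mul]

lemma mul_right_of_continuousWithinAt (h₁ : IsJumpLog I φ₁ τ L₁) (hτ : τ ∈ circleSet)
    (hc : ∀ i i', ContinuousWithinAt (fun z => φ₂ z i i') circleSet τ) (hu : IsUnit (φ₂ τ)) :
    IsJumpLog I (fun z => φ₁ z * φ₂ z) τ ((φ₂ τ)⁻¹ * L₁ * φ₂ τ) := by
  obtain ⟨P, M, hP, hM, hPu, hMu, hexp, hspec⟩ := h₁
  refine ⟨P * φ₂ τ, M * φ₂ τ, hP.mul (limP_of_continuousWithinAt hτ hc),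
    hM.mul (limM_of_continuousWithinAt hτ hc), hPu.mul hu, hMu.mul hu, ?_, ?_⟩
  · rw [← smul_mul_assoc, ← mul_smul_comm, Matrix.exp_conj' _ _ hu, hexp, Matrix.mul_inv_rev]
    simp only [mul_assoc]
  · obtain ⟨u, hu⟩ := hu
    rwa [← hu, ← Matrix.coe_units_inv, spectrum.units_conjugate']

lemma exists_mul_trace_add
    (hI : ∀ x ∈ I, ∀ y ∈ I, ∀ m : ℤ, x - y = (m : ℝ) → m = 0) (h0 : (0 : ℝ) ∈ I)
    (hτ : τ ∈ circleSet)
    (hc : (∀ i i', ContinuousWithinAt (fun z => φ₁ z i i') circleSet τ) ∨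
      (∀ i i', ContinuousWithinAt (fun z => φ₂ z i i') circleSet τ))
    (h₁ : IsJumpLog I φ₁ τ L₁) (h₂ : IsJumpLog I φ₂ τ L₂) :
    ∃ L, IsJumpLog I (fun z => φ₁ z * φ₂ z) τ L ∧ L.trace = L₁.trace + L₂.trace := by
  rcases hc with hc₁ | hc₂
  · refine ⟨L₂, h₂.mul_left_of_continuousWithinAt hτ hc₁ ?_, ?_⟩
    · exact h₁.isUnit_of_continuousWithinAt hτ hc₁
    · rw [h₁.trace_eq_zero_of_continuousWithinAt hI h0 hτ hc₁, zero_add]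
  · have hu := h₂.isUnit_of_continuousWithinAt hτ hc₂
    refine ⟨_, h₁.mul_right_of_continuousWithinAt hτ hc₂ hu, ?_⟩
    rw [Matrix.trace_conj' hu, h₂.trace_eq_zero_of_continuousWithinAt hI h0 hτ hc₂, add_zero]

end IsJumpLog

lemma ArcLogIncr.mul {f g : ℂ → ℂ} {x y : ℝ} {δ₁ δ₂ : ℂ}
    (hf : ArcLogIncr f x y δ₁) (hg : ArcLogIncr g x y δ₂) :
    ArcLogIncr (fun z => f z * g z) x y (δ₁ + δ₂) := by
  obtain ⟨h₁, hc₁, he₁, a₁, b₁, ha₁, hb₁, rfl⟩ := hf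
  obtain ⟨h₂, hc₂, he₂, a₂, b₂, ha₂, hb₂, rfl⟩ := hg
  refine ⟨h₁ + h₂, hc₁.add hc₂, fun θ hθ => ?_, a₁ + a₂, b₁ + b₂,
    ha₁.add ha₂, hb₁.add hb₂, by ring⟩
  exact (congr_arg₂ (· * ·) (he₁ θ hθ) (he₂ θ hθ)).trans (Complex.exp_add _ _).symm

lemma IsWindingNumberOff.mul {Γ : Set ℂ} {f g : ℂ → ℂ} {w₁ w₂ : ℤ}
    (hf : IsWindingNumberOff Γ f w₁) (hg : IsWindingNumberOff Γ g w₂) :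
    IsWindingNumberOff Γ (fun z => f z * g z) (w₁ + w₂) := by
  obtain ⟨h₁, hc₁, he₁, hw₁⟩ := hf
  obtain ⟨h₂, hc₂, he₂, hw₂⟩ := hg
  refine ⟨h₁ + h₂, hc₁.add hc₂, fun θ hθ hθΓ => ?_, ?_⟩
  · exact (congr_arg₂ (· * ·) (he₁ θ hθ hθΓ) (he₂ θ hθ hθΓ)).trans (Complex.exp_add _ _).symm
  · push_cast
    rw [hw₁, hw₂, Pi.add_apply, Pi.add_apply]
    ring

lemma IsIWindNum.mul {N R : ℕ} {I : Set ℝ} {D : JumpData R} {φ₁ φ₂ : ℂ → Mat N} {w₁ w₂ : ℤ}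
    (hjump : ∀ k L₁ L₂, IsJumpLog I φ₁ (D.τ k) L₁ → IsJumpLog I φ₂ (D.τ k) L₂ →
      ∃ L, IsJumpLog I (fun z => φ₁ z * φ₂ z) (D.τ k) L ∧ L.trace = L₁.trace + L₂.trace)
    (hw₁ : IsIWindNum I D φ₁ w₁) (hw₂ : IsIWindNum I D φ₂ w₂) :
    IsIWindNum I D (fun z => φ₁ z * φ₂ z) (w₁ + w₂) := by
  unfold IsIWindNum at hw₁ hw₂ ⊢
  split_ifs at hw₁ hw₂ ⊢
  · simpa only [IsWindingNumber, Matrix.det_mul] using hw₁.mul hw₂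
  · obtain ⟨L₁, δ₁, hL₁, hδ₁, hw₁⟩ := hw₁
    obtain ⟨L₂, δ₂, hL₂, hδ₂, hw₂⟩ := hw₂
    choose L hL htrace using fun k => hjump k (L₁ k) (L₂ k) (hL₁ k) (hL₂ k)
    refine ⟨L, δ₁ + δ₂, hL, fun k => ?_, ?_⟩
    · simpa only [Matrix.det_mul, Pi.add_apply] using (hδ₁ k).mul (hδ₂ k)
    · simp only [htrace, Finset.sum_add_distrib, Pi.add_apply]
      push_cast
      rw [hw₁, hw₂]
      ring

theorem statement4_general {N R : ℕ} (I : Set ℝ)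
    (hI : ∀ x ∈ I, ∀ y ∈ I, ∀ m : ℤ, x - y = (m : ℝ) → m = 0)
    (h0 : (0:ℝ) ∈ I)
    (D : JumpData R) (φ₁ φ₂ : ℂ → Mat N)
    (hreg₁ : IsIRegular I D φ₁) (hreg₂ : IsIRegular I D φ₂)
    (hdisj : ∀ k : Fin R,
      (∀ i i', ContinuousWithinAt (fun z => φ₁ z i i') circleSet (D.τ k)) ∨
      (∀ i i', ContinuousWithinAt (fun z => φ₂ z i i') circleSet (D.τ k))) :
    IsIRegular I D (fun z => φ₁ z * φ₂ z) ∧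
    ∀ w₁ w₂ : ℤ, IsIWindNum I D φ₁ w₁ → IsIWindNum I D φ₂ w₂ →
      IsIWindNum I D (fun z => φ₁ z * φ₂ z) (w₁ + w₂) := by
  have hjump : ∀ k L₁ L₂, IsJumpLog I φ₁ (D.τ k) L₁ → IsJumpLog I φ₂ (D.τ k) L₂ →
      ∃ L, IsJumpLog I (fun z => φ₁ z * φ₂ z) (D.τ k) L ∧ L.trace = L₁.trace + L₂.trace :=
    fun k _ _ => IsJumpLog.exists_mul_trace_add hI h0 (D.τ_mem_circleSet k) (hdisj k)
  refine ⟨⟨fun z hz => (hreg₁.1 z hz).mul (hreg₂.1 z hz), fun k => ?_⟩,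
    fun _ _ => IsIWindNum.mul hjump⟩
  obtain ⟨L₁, h₁⟩ := hreg₁.2 k
  obtain ⟨L₂, h₂⟩ := hreg₂.2 k
  exact (hjump k L₁ L₂ h₁ h₂).imp fun _ => And.left

/-- Proposition `p1.1`(iii): if `0 ∈ I` and `φ₁, φ₂ ∈ PC(𝕋;Γ)^{N×N}`
are `I`-regular with no common discontinuities, then `φ₁ φ₂` is `I`-regular and
`wind(φ₁φ₂; I) = wind(φ₁; I) + wind(φ₂; I)`. -/
theorem statement4 {N R : ℕ} (I : Set ℝ)
    (hI : ∀ x ∈ I, ∀ y ∈ I, ∀ m : ℤ, x - y = (m : ℝ) → m = 0)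
    (h0 : (0:ℝ) ∈ I)
    (D : JumpData R) (φ₁ φ₂ : ℂ → Mat N)
    (hφ₁ : IsPCmat D.Γ φ₁) (hφ₂ : IsPCmat D.Γ φ₂)
    (hreg₁ : IsIRegular I D φ₁) (hreg₂ : IsIRegular I D φ₂)
    (hdisj : ∀ k : Fin R,
      (∀ i i', ContinuousWithinAt (fun z => φ₁ z i i') circleSet (D.τ k)) ∨
      (∀ i i', ContinuousWithinAt (fun z => φ₂ z i i') circleSet (D.τ k))) :
    IsIRegular I D (fun z => φ₁ z * φ₂ z) ∧
    ∀ w₁ w₂ : ℤ, IsIWindNum I D φ₁ w₁ → IsIWindNum I D φ₂ w₂ →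
      IsIWindNum I D (fun z => φ₁ z * φ₂ z) (w₁ + w₂) :=
  statement4_general I hI h0 D φ₁ φ₂ hreg₁ hreg₂ hdisj

end
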